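/- arXiv:1711.02572 — 4 statements merged into one kernel-verified Lean document; each statement's English description precedes it below -/
import Mathlib

section
/- Let G act multisymplectically on an n-plectic manifold (M,ω) (i.e. Φ_g^*ω = ω), and let (f) be a weak homotopy moment map: f_k : P_{g,k} → Ω^{n-k}(M) with d f_k(p) = -ζ(k) ι_{V_p} ω, where ζ(k) = -(-1)^{k(k+1)/2}. Then for every g ∈ G and p ∈ P_{g,k}, the (n-k)-form ψ^k_{g,p} := f_k(p) - Φ_{g^{-1}}^* f_k(Ad_{g^{-1}} p) is closed. -/
noncomputable def zeta (k : ℕ) : ℝ := -((-1 : ℝ) ^ (k * (k + 1) / 2))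

theorem pullback_inv_pullback {G X : Type*} [Group G] (Pb : G → X → X)
    (hPb1 : ∀ x, Pb 1 x = x) (hPbmul : ∀ (a b : G) (x : X), Pb (a * b) x = Pb b (Pb a x))
    (g : G) (x : X) : Pb g⁻¹ (Pb g x) = x := by
  rw [← hPbmul, mul_inv_cancel, hPb1]

/-- Both `f p` and its transported copy `Φ_{g⁻¹}^* f(Ad_{g⁻¹} p)` are primitives of
`c • ι_{V_p} ω`. -/
theorem d_pullback_moment_eq {R G P Ω : Type*} [Semiring R] [Group G] [AddCommMonoid Ω]
    [Module R Ω] (d : Ω →ₗ[R] Ω) (Pb : G → Ω →ₗ[R] Ω) (hPb1 : ∀ τ, Pb 1 τ = τ)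
    (hPbmul : ∀ (a b : G) (τ : Ω), Pb (a * b) τ = Pb b (Pb a τ))
    (hPbd : ∀ (a : G) (τ : Ω), d (Pb a τ) = Pb a (d τ))
    (Ad : G → P → P) (ιVω : P → Ω) (hequiv : ∀ (a : G) (p : P), ιVω (Ad a⁻¹ p) = Pb a (ιVω p))
    (c : R) (f : P → Ω) (hmoment : ∀ p, d (f p) = c • ιVω p) (g : G) (p : P) :
    d (Pb g⁻¹ (f (Ad g⁻¹ p))) = d (f p) := by
  rw [hPbd, hmoment, hequiv, map_smul, hmoment,
    pullback_inv_pullback (fun a τ => Pb a τ) hPb1 hPbmul]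

/-- let `G` act multisymplectically on an `n`-plectic manifold `(M,ω)` and let
`f_k : P_{g,k} → Ω^{n-k}(M)` be a weak `k`-moment map, i.e. `d f_k(p) = −ζ(k) ι_{V_p} ω`.
Then for every `g ∈ G` and `p ∈ P_{g,k}`, the form
`ψ^k_{g,p} := f_k(p) − Φ_{g⁻¹}^* f_k(Ad_{g⁻¹} p)` is closed.

Here `P` stands for the Lie kernel `P_{g,k}` with its adjoint action `Ad`, `Pb h` is the
pullback `Φ_h^*` on forms (which commutes with `d`), and `ιVω p = ι_{V_p} ω`; the identity
`ι_{V_{Ad_{g⁻¹} p}} ω = Φ_g^*(ι_{V_p} ω)` encodes `V_{Ad_{g⁻¹}p} = Φ_g^* V_p` together with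
invariance of `ω`. -/
theorem weak_moment_psi_closed
    (G : Type*) [Group G]
    (P : Type*)                                   -- the Lie kernel P_{g,k}
    (Ω : Type*) [AddCommGroup Ω] [Module ℝ Ω]     -- (n-k)-forms on M
    (d : Ω →ₗ[ℝ] Ω)                               -- exterior derivative
    (Pb : G → Ω →ₗ[ℝ] Ω)                          -- pullback Φ_h^* on forms
    (hPb1 : ∀ τ : Ω, Pb 1 τ = τ)
    (hPbmul : ∀ (a b : G) (τ : Ω), Pb (a * b) τ = Pb b (Pb a τ))
    (hPbd : ∀ (a : G) (τ : Ω), d (Pb a τ) = Pb a (d τ))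
    (Ad : G → P → P)                              -- adjoint action on the Lie kernel
    (ιVω : P → Ω)                                 -- p ↦ ι_{V_p} ω
    (hequiv : ∀ (a : G) (p : P), ιVω (Ad a⁻¹ p) = Pb a (ιVω p))
    (k : ℕ) (f : P → Ω)
    (hmoment : ∀ p : P, d (f p) = (-(zeta k)) • ιVω p)
    (g : G) (p : P) :
    d (f p - Pb g⁻¹ (f (Ad g⁻¹ p))) = 0 := by
  rw [map_sub, d_pullback_moment_eq d Pb hPb1 hPbmul hPbd Ad ιVω hequiv _ f hmoment, sub_self]
end

section
/- If f_k and h_k are two weak k-moment maps for the same multisymplectic G-action, with cocycles σ_k and τ_k, then σ_k − τ_k is a coboundary: σ_k − τ_k = ∂(f_k − h_k), i.e. (σ_k − τ_k)(g)(p) = (f_k − h_k)(p) − Φ_{g^{-1}}^*((f_k − h_k)(Ad_{g^{-1}} p)). In particular the cohomology class [σ_k] ∈ H^1(G, P_{g,k}^* ⊗ Ω^{n-k}_{cl}) is independent of the choice of weak k-moment map. -/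
def zeroCochainCoboundary {R G P Ω : Type*} [Semiring R] [Group G] [AddCommGroup Ω]
    [Module R Ω] (Pb : G → Ω →ₗ[R] Ω) (Ad : G → P → P) (θ : P → Ω) (g : G) (p : P) : Ω :=
  θ p - Pb g⁻¹ (θ (Ad g⁻¹ p))

theorem zeroCochainCoboundary_sub {R G P Ω : Type*} [Semiring R] [Group G] [AddCommGroup Ω]
    [Module R Ω] (Pb : G → Ω →ₗ[R] Ω) (Ad : G → P → P) (f h : P → Ω) :
    zeroCochainCoboundary Pb Ad (f - h) =
      zeroCochainCoboundary Pb Ad f - zeroCochainCoboundary Pb Ad h := by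
  funext g p
  simp only [zeroCochainCoboundary, Pi.sub_apply, map_sub]
  abel

/-- if `f_k` and `h_k` are two weak `k`-moment maps for the same multisymplectic
`G`-action, with cocycles `σ_k(g)(p) = f_k(p) − Φ_{g⁻¹}^* f_k(Ad_{g⁻¹} p)` and
`τ_k(g)(p) = h_k(p) − Φ_{g⁻¹}^* h_k(Ad_{g⁻¹} p)`, then `f_k − h_k` takes values in closed
forms and `σ_k − τ_k = ∂(f_k − h_k)` is a coboundary:
`(σ_k − τ_k)(g)(p) = (f_k − h_k)(p) − Φ_{g⁻¹}^*((f_k − h_k)(Ad_{g⁻¹} p))`.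
In particular the class `[σ_k] ∈ H¹(G, P_{g,k}^* ⊗ Ω^{n-k}_{cl})` is independent of the
choice of weak `k`-moment map. -/
theorem weak_moment_cocycle_difference_coboundary
    (G : Type*) [Group G]
    (P : Type*)                                   -- the Lie kernel P_{g,k}
    (Ω : Type*) [AddCommGroup Ω] [Module ℝ Ω]     -- (n-k)-forms on M
    (d : Ω →ₗ[ℝ] Ω)
    (Pb : G → Ω →ₗ[ℝ] Ω)                          -- pullback Φ_a^* on forms
    (Ad : G → P → P)                              -- adjoint action on the Lie kernel
    (ιVω : P → Ω)                                 -- p ↦ ι_{V_p} ω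
    (k : ℕ) (f h : P → Ω)
    (hmomentf : ∀ p : P, d (f p) = (-(zeta k)) • ιVω p)
    (hmomenth : ∀ p : P, d (h p) = (-(zeta k)) • ιVω p) :
    -- f_k − h_k takes values in closed forms:
    (∀ p : P, d (f p - h p) = 0) ∧
    -- σ_k − τ_k = ∂(f_k − h_k):
    (∀ (g : G) (p : P),
      (f p - Pb g⁻¹ (f (Ad g⁻¹ p))) - (h p - Pb g⁻¹ (h (Ad g⁻¹ p))) =
        (f p - h p) - Pb g⁻¹ (f (Ad g⁻¹ p) - h (Ad g⁻¹ p))) := by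
  refine ⟨fun p => ?closed, fun g p => ?coboundary⟩
  case closed => rw [map_sub, hmomentf, hmomenth, sub_self]
  case coboundary => exact congrFun (congrFun (zeroCochainCoboundary_sub Pb Ad f h) g) p |>.symm
end

section
/- The map Σ_k(ξ)(p) := f_k([ξ,p]) + L_{V_ξ} f_k(p) is a Lie algebra 1-cocycle with values in R_k = P_{g,k}^* ⊗ Ω^{n-k}_{cl}(M): for all ξ, η ∈ g, ξ·(Σ_k(η)) − η·(Σ_k(ξ)) − Σ_k([ξ,η]) = 0, where the g-action on α ∈ R_k is (ξ·α)(p) = α([ξ,p]) + L_{V_ξ}(α(p)). -/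
theorem Sigma_is_lie_algebra_cocycle_general
    (g : Type*) [LieRing g]
    (P : Type*) [AddCommGroup P] [Module ℝ P]     -- the Lie kernel P_{g,k}
    (Ω : Type*) [AddCommGroup Ω] [Module ℝ Ω]     -- (n-k)-forms on M
    (act : g → P → P)                             -- p ↦ [ξ, p] (Schouten bracket action)
    (hact : ∀ (ξ η : g) (p : P),                  -- Jacobi identity for the Schouten bracket
      act ⁅ξ, η⁆ p = act η (act ξ p) - act ξ (act η p))
    (L : g → Ω →ₗ[ℝ] Ω)                           -- Lie derivative along V_ξ
    (hL : ∀ (ξ η : g) (τ : Ω), L ⁅ξ, η⁆ τ = L ξ (L η τ) - L η (L ξ τ))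
    (f : P →ₗ[ℝ] Ω)                               -- the weak k-moment map f_k
    (ξ η : g) (p : P) :
    -- (ξ·Σ_k(η))(p) − (η·Σ_k(ξ))(p) − Σ_k([ξ,η])(p) = 0, with
    -- Σ_k(χ)(q) = f(act χ q) + L χ (f q) and (χ·α)(q) = α(act χ q) + L χ (α q):
    ((f (act η (act ξ p)) + L η (f (act ξ p))) + L ξ (f (act η p) + L η (f p)))
      - ((f (act ξ (act η p)) + L ξ (f (act η p))) + L η (f (act ξ p) + L ξ (f p)))
      - (f (act ⁅ξ, η⁆ p) + L ⁅ξ, η⁆ (f p)) = 0 := by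
  -- `Σ_k(ξ) = ξ·f_k`, and `hact`, `hL` say the action on `R_k` is a representation.
  simp only [hact, hL, map_add, map_sub]
  abel

/-- the map `Σ_k(ξ)(p) := f_k([ξ,p]) + L_{V_ξ} f_k(p)` is a Lie algebra
1-cocycle with values in `R_k = P_{g,k}^* ⊗ Ω^{n-k}_{cl}(M)`: for all `ξ, η ∈ g`,
`ξ·(Σ_k(η)) − η·(Σ_k(ξ)) − Σ_k([ξ,η]) = 0`, where the `g`-action on `α ∈ R_k` is
`(ξ·α)(p) = α([ξ,p]) + L_{V_ξ}(α(p))`.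

Here `act ξ p` denotes the (Schouten) bracket action of `ξ ∈ g` on the Lie kernel and
`L ξ` the Lie derivative along `V_ξ`; `hact` and `hL` record the Jacobi identity for the
Schouten bracket and `L_{V_{[ξ,η]}} = L_{V_ξ}L_{V_η} − L_{V_η}L_{V_ξ}` (with a consistent
anti- or homomorphism convention for the infinitesimal generators). -/
theorem Sigma_is_lie_algebra_cocycle
    (g : Type*) [LieRing g] [LieAlgebra ℝ g]
    (P : Type*) [AddCommGroup P] [Module ℝ P]     -- the Lie kernel P_{g,k}
    (Ω : Type*) [AddCommGroup Ω] [Module ℝ Ω]     -- (n-k)-forms on M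
    (act : g → P → P)                             -- p ↦ [ξ, p] (Schouten bracket action)
    (hact : ∀ (ξ η : g) (p : P),                  -- Jacobi identity for the Schouten bracket
      act ⁅ξ, η⁆ p = act η (act ξ p) - act ξ (act η p))
    (L : g → Ω →ₗ[ℝ] Ω)                           -- Lie derivative along V_ξ
    (hL : ∀ (ξ η : g) (τ : Ω), L ⁅ξ, η⁆ τ = L ξ (L η τ) - L η (L ξ τ))
    (f : P →ₗ[ℝ] Ω)                               -- the weak k-moment map f_k
    (ξ η : g) (p : P) :
    -- (ξ·Σ_k(η))(p) − (η·Σ_k(ξ))(p) − Σ_k([ξ,η])(p) = 0, with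
    -- Σ_k(χ)(q) = f(act χ q) + L χ (f q) and (χ·α)(q) = α(act χ q) + L χ (α q):
    ((f (act η (act ξ p)) + L η (f (act ξ p))) + L ξ (f (act η p) + L η (f p)))
      - ((f (act ξ (act η p)) + L ξ (f (act η p))) + L η (f (act ξ p) + L ξ (f p)))
      - (f (act ⁅ξ, η⁆ p) + L ⁅ξ, η⁆ (f p)) = 0 :=
  Sigma_is_lie_algebra_cocycle_general g P Ω act hact L hL f ξ η p
end

section
/- If the k-th Lie algebra cohomology H^k(g) (with trivial coefficients) vanishes, then P_{g,k} = ker ∂_k equals the image of ∂_{k+1} : Λ^{k+1} g → Λ^k g, and consequently for any multisymplectic action of g on an n-plectic manifold (M,ω) a (not necessarily equivariant) weak k-moment map exists, given on p = ∂q by f_k(p) := (−1)^k ι_{V_q} ω up to the sign convention f satisfying d f_k(p) = −ζ(k) ι_{V_p} ω. -/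
/-!
Over a field, a vector lies in a subspace as soon as every functional vanishing on the
subspace vanishes on it. Applied to `im ∂_{k+1}`, the vanishing of `H^k(g)` turns every such
functional into a coboundary `β ∘ ∂`, which kills `ker ∂_k`; hence `ker ∂_k = im ∂_{k+1}`.
On `p = ∂q` the extended Cartan lemma exhibits `ι_{V_p} ω` as the exact form
`d((−1)^k ι_{V_q} ω)`, so choosing such a `q` for each `p` gives the weak moment map.
-/

/-- The wedge product of a list of vectors, as an element of the exterior algebra. -/
noncomputable def wedgeList {g : Type*} [AddCommGroup g] [Module ℝ g]
    (l : List g) : ExteriorAlgebra ℝ g :=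
  (l.map (ExteriorAlgebra.ι ℝ)).prod

/-- The Chevalley-Eilenberg boundary formula on a decomposable `ξ₁ ∧ ⋯ ∧ ξ_k`. -/
noncomputable def ceBoundaryFormula {g : Type*} [LieRing g] [LieAlgebra ℝ g]
    {k : ℕ} (ξ : Fin k → g) : ExteriorAlgebra ℝ g :=
  ∑ i : Fin k, ∑ j : Fin k,
    if (i : ℕ) < (j : ℕ) then
      ((-1 : ℤ) ^ ((i : ℕ) + (j : ℕ))) •
        wedgeList (⁅ξ i, ξ j⁆ :: (((List.ofFn ξ).eraseIdx (j : ℕ)).eraseIdx (i : ℕ)))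
    else 0

theorem mem_map_of_map_eq_zero_of_dual_exact {K U V W : Type*} [Field K]
    [AddCommGroup U] [Module K U] [AddCommGroup V] [Module K V] [AddCommGroup W] [Module K W]
    (δ₁ : U →ₗ[K] V) (δ₀ : V →ₗ[K] W) (A : Submodule K U) (B : Submodule K V)
    (hdual : ∀ α : Module.Dual K V, (∀ q ∈ A, α (δ₁ q) = 0) →
      ∃ β : Module.Dual K W, ∀ p ∈ B, α p = β (δ₀ p))
    {p : V} (hp : p ∈ B) (hp₀ : δ₀ p = 0) : p ∈ A.map δ₁ := by
  rw [← Subspace.dualAnnihilator_dualCoannihilator_eq (W := A.map δ₁),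
    Submodule.mem_dualCoannihilator]
  intro α hα
  rw [Submodule.mem_dualAnnihilator] at hα
  obtain ⟨β, hβ⟩ := hdual α fun q hq => hα _ (Submodule.mem_map_of_mem hq)
  rw [hβ p hp, hp₀, map_zero]

theorem exists_primitive_on_image {U V Ω Ω' : Type*} [Nonempty U]
    (δ : U → V) (A : Set U) (C : V → Ω') (d : Ω → Ω') (D : U → Ω)
    (hD : ∀ q ∈ A, C (δ q) = d (D q)) :
    ∃ f : V → Ω, ∀ p ∈ δ '' A, d (f p) = C p :=
  ⟨D ∘ Function.invFunOn δ A, fun p hp => by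
    rw [Function.comp_apply, ← hD _ (Function.invFunOn_mem hp), Function.invFunOn_eq hp]⟩

theorem weak_moment_map_exists_of_Hk_vanishes_general
    (g : Type*) [LieRing g] [LieAlgebra ℝ g]
    (Ω : Type*) [AddCommGroup Ω] [Module ℝ Ω]     -- differential forms on M
    (d : Ω →ₗ[ℝ] Ω)                               -- exterior derivative
    (bd : ExteriorAlgebra ℝ g →ₗ[ℝ] ExteriorAlgebra ℝ g)   -- the CE boundary ∂
    (C : ExteriorAlgebra ℝ g →ₗ[ℝ] Ω)             -- p ↦ ι_{V_p} ω
    (k : ℕ)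
    -- extended Cartan lemma for the ω-preserving action (dω = 0, L_{V_ξ}ω = 0):
    (hEC : ∀ q ∈ ⋀[ℝ]^(k+1) g, C (bd q) = ((-1 : ℤ) ^ k) • d (C q))
    -- H^k(g) = 0:
    (hHk : ∀ α : ExteriorAlgebra ℝ g →ₗ[ℝ] ℝ,
      (∀ q ∈ ⋀[ℝ]^(k+1) g, α (bd q) = 0) →
      ∃ β : ExteriorAlgebra ℝ g →ₗ[ℝ] ℝ, ∀ p ∈ ⋀[ℝ]^k g, α p = β (bd p)) :
    -- ker ∂_k = im ∂_{k+1}: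
    (∀ p ∈ ⋀[ℝ]^k g, bd p = 0 → ∃ q ∈ ⋀[ℝ]^(k+1) g, bd q = p) ∧
    -- a (not necessarily equivariant) weak k-moment map exists:
    (∃ f : ExteriorAlgebra ℝ g → Ω,
      ∀ p ∈ ⋀[ℝ]^k g, bd p = 0 → d (f p) = (-(zeta k)) • C p) := by
  have hexact : ∀ p ∈ ⋀[ℝ]^k g, bd p = 0 → ∃ q ∈ ⋀[ℝ]^(k+1) g, bd q = p := fun p hp hp₀ =>
    Submodule.mem_map.1 (mem_map_of_map_eq_zero_of_dual_exact bd bd _ _ hHk hp hp₀)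
  obtain ⟨f, hf⟩ := exists_primitive_on_image bd (⋀[ℝ]^(k+1) g) C d
    (fun q => ((-1 : ℤ) ^ k) • C q) fun q hq => by rw [hEC q hq, map_zsmul]
  refine ⟨hexact, fun p => (-(zeta k)) • f p, fun p hp hp₀ => ?_⟩
  rw [map_smul, hf p (hexact p hp hp₀)]

/-- let `g` be a finite-dimensional real Lie algebra with Chevalley-Eilenberg
boundary `∂` (the linear map `bd`), and suppose the `k`-th Lie algebra cohomology with
trivial coefficients vanishes: every functional `α` vanishing on `∂(Λ^{k+1} g)` is a
coboundary `β ∘ ∂` on `Λ^k g`. Then the Lie kernel `P_{g,k} = ker ∂_k` equals the image of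
`∂_{k+1} : Λ^{k+1} g → Λ^k g`; consequently, for any multisymplectic action of `g` on an
`n`-plectic manifold `(M,ω)` (where `C p = ι_{V_p} ω` and, by the extended Cartan lemma,
`ι_{V_{∂q}} ω = (−1)^k d(ι_{V_q} ω)` for `q ∈ Λ^{k+1} g`), a not necessarily equivariant
weak `k`-moment map exists: `f` with `d f(p) = −ζ(k) ι_{V_p} ω` for all `p` in the Lie
kernel, given on `p = ∂q` by `(−1)^k ι_{V_q} ω` up to sign convention. -/
theorem weak_moment_map_exists_of_Hk_vanishes
    (g : Type*) [LieRing g] [LieAlgebra ℝ g] [FiniteDimensional ℝ g]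
    (Ω : Type*) [AddCommGroup Ω] [Module ℝ Ω]     -- differential forms on M
    (d : Ω →ₗ[ℝ] Ω)                               -- exterior derivative
    (bd : ExteriorAlgebra ℝ g →ₗ[ℝ] ExteriorAlgebra ℝ g)   -- the CE boundary ∂
    (hbd : ∀ (m : ℕ) (ξ : Fin m → g), bd (wedgeList (List.ofFn ξ)) = ceBoundaryFormula ξ)
    (C : ExteriorAlgebra ℝ g →ₗ[ℝ] Ω)             -- p ↦ ι_{V_p} ω
    (k : ℕ)
    -- extended Cartan lemma for the ω-preserving action (dω = 0, L_{V_ξ}ω = 0):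
    (hEC : ∀ q ∈ ⋀[ℝ]^(k+1) g, C (bd q) = ((-1 : ℤ) ^ k) • d (C q))
    -- H^k(g) = 0:
    (hHk : ∀ α : ExteriorAlgebra ℝ g →ₗ[ℝ] ℝ,
      (∀ q ∈ ⋀[ℝ]^(k+1) g, α (bd q) = 0) →
      ∃ β : ExteriorAlgebra ℝ g →ₗ[ℝ] ℝ, ∀ p ∈ ⋀[ℝ]^k g, α p = β (bd p)) :
    -- ker ∂_k = im ∂_{k+1}:
    (∀ p ∈ ⋀[ℝ]^k g, bd p = 0 → ∃ q ∈ ⋀[ℝ]^(k+1) g, bd q = p) ∧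
    -- a (not necessarily equivariant) weak k-moment map exists:
    (∃ f : ExteriorAlgebra ℝ g → Ω,
      ∀ p ∈ ⋀[ℝ]^k g, bd p = 0 → d (f p) = (-(zeta k)) • C p) :=
  weak_moment_map_exists_of_Hk_vanishes_general g Ω d bd C k hEC hHk
end
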